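/- Policy deviation bound (corrected term (b) of the offline bound): for a transition kernel P and two policies π1, π2 on the same finite state and action spaces (same reward, discount, and initial distribution), J[P](π1) − J[P](π2) ≥ −(2·r_max/(1−γ)²) · Σ_s ν[P,π1](s) · D_TV( π1(s), π2(s) ). -/

import Mathlib

open Real

noncomputable section

variable {S A : Type*} [Fintype S] [Fintype A]

/-- Time-`t` state-action distribution `d_t[P,pol]` started from the initial state
distribution `ρ0`:  `d_0(s,a) = ρ0(s)·pol(s)(a)` and
`d_{t+1}(s',a') = Σ_{(s,a)} d_t(s,a)·P(s,a)(s')·pol(s')(a')`. -/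
def dDist (P : S → A → PMF S) (pol : S → PMF A) (ρ0 : PMF S) : ℕ → S × A → ℝ
  | 0 => fun p => (ρ0 p.1).toReal * (pol p.1 p.2).toReal
  | (t + 1) => fun p' =>
      ∑ p : S × A, dDist P pol ρ0 t p * (P p.1 p.2 p'.1).toReal * (pol p'.1 p'.2).toReal

/-- Normalized state-action occupancy `ρ[P,pol](s,a) = (1−γ)·Σ_t γ^t·d_t[P,pol](s,a)`. -/
def occ (P : S → A → PMF S) (pol : S → PMF A) (ρ0 : PMF S) (γ : ℝ) (p : S × A) : ℝ :=
  (1 - γ) * ∑' t : ℕ, γ ^ t * dDist P pol ρ0 t p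

/-- Normalized state occupancy `ν[P,pol](s) = Σ_a ρ[P,pol](s,a)`. -/
def stateOcc (P : S → A → PMF S) (pol : S → PMF A) (ρ0 : PMF S) (γ : ℝ) (s : S) : ℝ :=
  ∑ a : A, occ P pol ρ0 γ (s, a)

/-- Expected discounted return `J[P](pol) = Σ_t γ^t Σ_{(s,a)} d_t[P,pol](s,a)·r(s,a)`. -/
def Jret (P : S → A → PMF S) (pol : S → PMF A) (ρ0 : PMF S) (r : S → A → ℝ) (γ : ℝ) : ℝ :=
  ∑' t : ℕ, γ ^ t * ∑ p : S × A, dDist P pol ρ0 t p * r p.1 p.2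

/-- Value function `V[P,pol](s)`: the return with the recursion started from the point
distribution at `s` (i.e. `d_0(s',a) = 1[s'=s]·pol(s')(a)`). -/
def Vval (P : S → A → PMF S) (pol : S → PMF A) (r : S → A → ℝ) (γ : ℝ) (s : S) : ℝ :=
  Jret P pol (PMF.pure s) r γ

/-- Action-value function `Q[P,pol](s,a) = r(s,a) + γ·Σ_{s'} P(s,a)(s')·V[P,pol](s')`. -/
def Qval (P : S → A → PMF S) (pol : S → PMF A) (r : S → A → ℝ) (γ : ℝ) (s : S) (a : A) : ℝ :=
  r s a + γ * ∑ s' : S, (P s a s').toReal * Vval P pol r γ s'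

/-- Total variation distance between two pmfs on a finite type:
`D_TV(p,q) = (1/2)·Σ_x |p(x) − q(x)|`. -/
def dTV {X : Type*} [Fintype X] (p q : PMF X) : ℝ :=
  (1 / 2) * ∑ x : X, |(p x).toReal - (q x).toReal|

/-- Kullback–Leibler divergence between two pmfs on a finite type (with `q` everywhere
positive): `D_KL(p‖q) = Σ_x p(x)·log(p(x)/q(x))`, with the convention `0·log 0 = 0`. -/
def dKL {X : Type*} [Fintype X] (p q : PMF X) : ℝ :=
  ∑ x : X, (p x).toReal * Real.log ((p x).toReal / (q x).toReal)

/-- Shannon entropy of a pmf on a finite type, `H(p) = −Σ_x p(x)·log p(x)`,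
with the convention `0·log 0 = 0`. -/
def entropyPMF {X : Type*} [Fintype X] (p : PMF X) : ℝ :=
  - ∑ x : X, (p x).toReal * Real.log (p x).toReal

end

noncomputable section Aux

variable {S A : Type*} [Fintype S] [Fintype A]

lemma pmf_sum_toReal {X : Type*} [Fintype X] (p : PMF X) :
    ∑ x : X, (p x).toReal = 1 := by
  rw [← ENNReal.toReal_sum (fun x _ => p.apply_ne_top x), ← tsum_fintype (L := SummationFilter.unconditional X), p.tsum_coe,
    ENNReal.toReal_one]

lemma dDist_nonneg (P : S → A → PMF S) (pol : S → PMF A) (ρ0 : PMF S) :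
    ∀ t p, 0 ≤ dDist P pol ρ0 t p
  | 0, _ => mul_nonneg ENNReal.toReal_nonneg ENNReal.toReal_nonneg
  | (t+1), _ => Finset.sum_nonneg fun q _ =>
      mul_nonneg (mul_nonneg (dDist_nonneg P pol ρ0 t q) ENNReal.toReal_nonneg)
        ENNReal.toReal_nonneg

/-- Collapsing a push-forward style double sum. -/
lemma collapse (P : S → A → PMF S) (pol : S → PMF A) (f : S × A → ℝ) :
    ∑ p' : S × A, ∑ p : S × A,
        f p * (P p.1 p.2 p'.1).toReal * (pol p'.1 p'.2).toReal
      = ∑ p : S × A, f p := by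
  rw [Finset.sum_comm]
  refine Finset.sum_congr rfl fun p _ => ?_
  rw [Fintype.sum_prod_type]
  simp_rw [mul_assoc, ← Finset.mul_sum, pmf_sum_toReal, mul_one]
  rw [pmf_sum_toReal, mul_one]

lemma dDist_sum_one (P : S → A → PMF S) (pol : S → PMF A) (ρ0 : PMF S) :
    ∀ t, ∑ p : S × A, dDist P pol ρ0 t p = 1
  | 0 => by
    show ∑ p : S × A, (ρ0 p.1).toReal * (pol p.1 p.2).toReal = 1
    rw [Fintype.sum_prod_type]
    simp_rw [← Finset.mul_sum, pmf_sum_toReal, mul_one]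
    exact pmf_sum_toReal ρ0
  | (t+1) => by
    show ∑ p' : S × A, ∑ p : S × A,
        dDist P pol ρ0 t p * (P p.1 p.2 p'.1).toReal * (pol p'.1 p'.2).toReal = 1
    rw [collapse]
    exact dDist_sum_one P pol ρ0 t

lemma dDist_le_one (P : S → A → PMF S) (pol : S → PMF A) (ρ0 : PMF S) (t : ℕ) (p : S × A) :
    dDist P pol ρ0 t p ≤ 1 := by
  calc dDist P pol ρ0 t p ≤ ∑ q : S × A, dDist P pol ρ0 t q :=
        Finset.single_le_sum (fun q _ => dDist_nonneg P pol ρ0 t q) (Finset.mem_univ p)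
    _ = 1 := dDist_sum_one P pol ρ0 t

lemma nSt_succ (P : S → A → PMF S) (pol : S → PMF A) (ρ0 : PMF S) (t : ℕ) (s' : S) :
    ∑ a : A, dDist P pol ρ0 (t+1) (s', a)
      = ∑ p : S × A, dDist P pol ρ0 t p * (P p.1 p.2 s').toReal := by
  show ∑ a : A, ∑ p : S × A,
      dDist P pol ρ0 t p * (P p.1 p.2 s').toReal * (pol s' a).toReal = _
  rw [Finset.sum_comm]
  refine Finset.sum_congr rfl fun p _ => ?_
  rw [← Finset.mul_sum, pmf_sum_toReal, mul_one]

end Aux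

noncomputable section Aux2

set_option linter.unusedSectionVars false

variable {S A : Type*} [Fintype S] [Fintype A]

def polGap (pol1 pol2 : S → PMF A) (s : S) : ℝ :=
  ∑ a : A, |(pol1 s a).toReal - (pol2 s a).toReal|

def epsT (P : S → A → PMF S) (pol1 pol2 : S → PMF A) (ρ0 : PMF S) (t : ℕ) : ℝ :=
  ∑ s : S, (∑ a : A, dDist P pol1 ρ0 t (s, a)) * polGap pol1 pol2 s

def DT (P : S → A → PMF S) (pol1 pol2 : S → PMF A) (ρ0 : PMF S) (t : ℕ) : ℝ :=
  ∑ p : S × A, |dDist P pol1 ρ0 t p - dDist P pol2 ρ0 t p|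

lemma polGap_nonneg (pol1 pol2 : S → PMF A) (s : S) : 0 ≤ polGap pol1 pol2 s :=
  Finset.sum_nonneg fun _ _ => abs_nonneg _

lemma polGap_le_two (pol1 pol2 : S → PMF A) (s : S) : polGap pol1 pol2 s ≤ 2 := by
  unfold polGap
  calc ∑ a : A, |(pol1 s a).toReal - (pol2 s a).toReal|
      ≤ ∑ a : A, ((pol1 s a).toReal + (pol2 s a).toReal) :=
        Finset.sum_le_sum fun a _ => (abs_sub _ _).trans (by
          rw [abs_of_nonneg ENNReal.toReal_nonneg, abs_of_nonneg ENNReal.toReal_nonneg])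
    _ = 2 := by rw [Finset.sum_add_distrib, pmf_sum_toReal, pmf_sum_toReal]; norm_num

lemma nSt_nonneg (P : S → A → PMF S) (pol : S → PMF A) (ρ0 : PMF S) (t : ℕ) (s : S) :
    0 ≤ ∑ a : A, dDist P pol ρ0 t (s, a) :=
  Finset.sum_nonneg fun a _ => dDist_nonneg P pol ρ0 t (s, a)

lemma nSt_sum_one (P : S → A → PMF S) (pol : S → PMF A) (ρ0 : PMF S) (t : ℕ) :
    ∑ s : S, ∑ a : A, dDist P pol ρ0 t (s, a) = 1 := by
  rw [← Fintype.sum_prod_type]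
  exact dDist_sum_one P pol ρ0 t

lemma epsT_nonneg (P : S → A → PMF S) (pol1 pol2 : S → PMF A) (ρ0 : PMF S) (t : ℕ) :
    0 ≤ epsT P pol1 pol2 ρ0 t :=
  Finset.sum_nonneg fun s _ =>
    mul_nonneg (nSt_nonneg P pol1 ρ0 t s) (polGap_nonneg pol1 pol2 s)

lemma epsT_le_two (P : S → A → PMF S) (pol1 pol2 : S → PMF A) (ρ0 : PMF S) (t : ℕ) :
    epsT P pol1 pol2 ρ0 t ≤ 2 := by
  unfold epsT
  calc ∑ s : S, (∑ a : A, dDist P pol1 ρ0 t (s, a)) * polGap pol1 pol2 s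
      ≤ ∑ s : S, (∑ a : A, dDist P pol1 ρ0 t (s, a)) * 2 :=
        Finset.sum_le_sum fun s _ =>
          mul_le_mul_of_nonneg_left (polGap_le_two pol1 pol2 s) (nSt_nonneg P pol1 ρ0 t s)
    _ = 2 := by rw [← Finset.sum_mul, nSt_sum_one, one_mul]

lemma DT_zero (P : S → A → PMF S) (pol1 pol2 : S → PMF A) (ρ0 : PMF S) :
    DT P pol1 pol2 ρ0 0 = epsT P pol1 pol2 ρ0 0 := by
  unfold DT epsT polGap
  simp only [dDist]
  rw [Fintype.sum_prod_type]
  refine Finset.sum_congr rfl fun s _ => ?_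
  rw [← Finset.mul_sum, pmf_sum_toReal, mul_one, Finset.mul_sum]
  refine Finset.sum_congr rfl fun a _ => ?_
  rw [← mul_sub, abs_mul, abs_of_nonneg (ENNReal.toReal_nonneg : (0:ℝ) ≤ (ρ0 s).toReal)]

lemma DT_succ (P : S → A → PMF S) (pol1 pol2 : S → PMF A) (ρ0 : PMF S) (t : ℕ) :
    DT P pol1 pol2 ρ0 (t+1) ≤ DT P pol1 pol2 ρ0 t + epsT P pol1 pol2 ρ0 (t+1) := by
  have key : ∀ p' : S × A,
      |dDist P pol1 ρ0 (t+1) p' - dDist P pol2 ρ0 (t+1) p'| ≤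
        (∑ p : S × A, |dDist P pol1 ρ0 t p - dDist P pol2 ρ0 t p|
            * (P p.1 p.2 p'.1).toReal * (pol2 p'.1 p'.2).toReal)
        + (∑ a : A, dDist P pol1 ρ0 (t+1) (p'.1, a))
            * |(pol1 p'.1 p'.2).toReal - (pol2 p'.1 p'.2).toReal| := by
    intro p'
    have hrw : dDist P pol1 ρ0 (t+1) p' - dDist P pol2 ρ0 (t+1) p' =
        (∑ p : S × A, (dDist P pol1 ρ0 t p - dDist P pol2 ρ0 t p)
            * (P p.1 p.2 p'.1).toReal * (pol2 p'.1 p'.2).toReal)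
        + (∑ p : S × A, dDist P pol1 ρ0 t p * (P p.1 p.2 p'.1).toReal)
            * ((pol1 p'.1 p'.2).toReal - (pol2 p'.1 p'.2).toReal) := by
      show (∑ p : S × A,
            dDist P pol1 ρ0 t p * (P p.1 p.2 p'.1).toReal * (pol1 p'.1 p'.2).toReal)
          - (∑ p : S × A,
            dDist P pol2 ρ0 t p * (P p.1 p.2 p'.1).toReal * (pol2 p'.1 p'.2).toReal) = _
      rw [Finset.sum_mul, ← Finset.sum_add_distrib, ← Finset.sum_sub_distrib]
      exact Finset.sum_congr rfl fun p _ => by ring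
    rw [hrw, nSt_succ]
    refine (abs_add_le _ _).trans (add_le_add ?_ ?_)
    · refine (Finset.abs_sum_le_sum_abs _ _).trans
        (le_of_eq (Finset.sum_congr rfl fun p _ => ?_))
      rw [abs_mul, abs_mul, abs_of_nonneg (ENNReal.toReal_nonneg : (0:ℝ) ≤ (P p.1 p.2 p'.1).toReal),
        abs_of_nonneg (ENNReal.toReal_nonneg : (0:ℝ) ≤ (pol2 p'.1 p'.2).toReal)]
    · rw [abs_mul, abs_of_nonneg (Finset.sum_nonneg fun p _ =>
        mul_nonneg (dDist_nonneg P pol1 ρ0 t p) ENNReal.toReal_nonneg)]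
  calc DT P pol1 pol2 ρ0 (t+1)
      ≤ ∑ p' : S × A, ((∑ p : S × A, |dDist P pol1 ρ0 t p - dDist P pol2 ρ0 t p|
            * (P p.1 p.2 p'.1).toReal * (pol2 p'.1 p'.2).toReal)
        + (∑ a : A, dDist P pol1 ρ0 (t+1) (p'.1, a))
            * |(pol1 p'.1 p'.2).toReal - (pol2 p'.1 p'.2).toReal|) :=
        Finset.sum_le_sum fun p' _ => key p'
    _ = DT P pol1 pol2 ρ0 t + epsT P pol1 pol2 ρ0 (t+1) := by
        rw [Finset.sum_add_distrib]
        congr 1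
        · exact collapse P pol2 fun p => |dDist P pol1 ρ0 t p - dDist P pol2 ρ0 t p|
        · rw [Fintype.sum_prod_type]
          unfold epsT polGap
          refine Finset.sum_congr rfl fun s _ => ?_
          rw [Finset.mul_sum]

lemma DT_le (P : S → A → PMF S) (pol1 pol2 : S → PMF A) (ρ0 : PMF S) :
    ∀ t, DT P pol1 pol2 ρ0 t ≤ ∑ k ∈ Finset.range (t+1), epsT P pol1 pol2 ρ0 k
  | 0 => by rw [DT_zero]; simp
  | (t+1) => by
    refine (DT_succ P pol1 pol2 ρ0 t).trans ?_
    rw [Finset.sum_range_succ]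
    exact add_le_add_left (DT_le P pol1 pol2 ρ0 t) _

end Aux2

/-- policy deviation bound, corrected term (b) of the offline bound:
for a kernel `P` and two policies `pol1,pol2`,
`J[P](pol1) − J[P](pol2) ≥ −(2·r_max/(1−γ)²) Σ_s ν[P,pol1](s)·D_TV(pol1(s), pol2(s))`. -/
theorem policy_deviation_bound
    {S A : Type*} [Fintype S] [Fintype A] [Nonempty S] [Nonempty A]
    (P : S → A → PMF S) (pol1 pol2 : S → PMF A) (ρ0 : PMF S)
    (r : S → A → ℝ) (rmax : ℝ) (hrmax : 0 ≤ rmax) (hr : ∀ s a, |r s a| ≤ rmax)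
    (γ : ℝ) (hγ0 : 0 ≤ γ) (hγ1 : γ < 1) :
    Jret P pol1 ρ0 r γ - Jret P pol2 ρ0 r γ ≥
      -(2 * rmax / (1 - γ) ^ 2) *
        ∑ s : S, stateOcc P pol1 ρ0 γ s * dTV (pol1 s) (pol2 s) := by
  have h1γ : (0:ℝ) < 1 - γ := by linarith
  have hgeo : Summable fun n : ℕ => γ ^ n := summable_geometric_of_lt_one hγ0 hγ1
  set c1 : ℕ → ℝ := fun t => ∑ p : S × A, dDist P pol1 ρ0 t p * r p.1 p.2 with hc1def
  set c2 : ℕ → ℝ := fun t => ∑ p : S × A, dDist P pol2 ρ0 t p * r p.1 p.2 with hc2def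
  -- boundedness of the reward averages
  have habs : ∀ (pol : S → PMF A) (t : ℕ),
      |∑ p : S × A, dDist P pol ρ0 t p * r p.1 p.2| ≤ rmax := by
    intro pol t
    calc |∑ p : S × A, dDist P pol ρ0 t p * r p.1 p.2|
        ≤ ∑ p : S × A, |dDist P pol ρ0 t p * r p.1 p.2| :=
          Finset.abs_sum_le_sum_abs _ _
      _ ≤ ∑ p : S × A, dDist P pol ρ0 t p * rmax := by
          refine Finset.sum_le_sum fun p _ => ?_
          rw [abs_mul, abs_of_nonneg (dDist_nonneg P pol ρ0 t p)]
          exact mul_le_mul_of_nonneg_left (hr p.1 p.2) (dDist_nonneg P pol ρ0 t p)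
      _ = rmax := by rw [← Finset.sum_mul, dDist_sum_one, one_mul]
  have hsum1 : Summable fun t : ℕ => γ ^ t * c1 t := by
    refine Summable.of_norm_bounded (hgeo.mul_right rmax) fun t => ?_
    rw [Real.norm_eq_abs, abs_mul, abs_of_nonneg (pow_nonneg hγ0 t)]
    exact mul_le_mul_of_nonneg_left (habs pol1 t) (pow_nonneg hγ0 t)
  have hsum2 : Summable fun t : ℕ => γ ^ t * c2 t := by
    refine Summable.of_norm_bounded (hgeo.mul_right rmax) fun t => ?_
    rw [Real.norm_eq_abs, abs_mul, abs_of_nonneg (pow_nonneg hγ0 t)]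
    exact mul_le_mul_of_nonneg_left (habs pol2 t) (pow_nonneg hγ0 t)
  have hJ : Jret P pol1 ρ0 r γ - Jret P pol2 ρ0 r γ = ∑' t : ℕ, γ ^ t * (c1 t - c2 t) := by
    unfold Jret
    rw [← Summable.tsum_sub hsum1 hsum2]
    exact tsum_congr fun t => (mul_sub _ _ _).symm
  -- Cauchy product setup
  set f : ℕ → ℝ := fun k => γ ^ k * epsT P pol1 pol2 ρ0 k with hfdef
  have hfnorm : Summable fun k => ‖f k‖ := by
    refine Summable.of_norm_bounded (hgeo.mul_right 2) fun k => ?_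
    rw [norm_norm, Real.norm_eq_abs, abs_mul, abs_of_nonneg (pow_nonneg hγ0 k),
      abs_of_nonneg (epsT_nonneg P pol1 pol2 ρ0 k)]
    exact mul_le_mul_of_nonneg_left (epsT_le_two P pol1 pol2 ρ0 k) (pow_nonneg hγ0 k)
  have hf : Summable f := hfnorm.of_norm
  have hgnorm : Summable fun n : ℕ => ‖γ ^ n‖ := by
    simpa [Real.norm_eq_abs, abs_of_nonneg (pow_nonneg hγ0 _)] using hgeo
  set E : ℕ → ℝ := fun t => ∑ k ∈ Finset.range (t + 1), epsT P pol1 pol2 ρ0 k with hEdef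
  have hEeq : ∀ n : ℕ, ∑ k ∈ Finset.range (n + 1), f k * γ ^ (n - k) = γ ^ n * E n := by
    intro n
    rw [hEdef, Finset.mul_sum]
    refine Finset.sum_congr rfl fun k hk => ?_
    have hkn : k ≤ n := Nat.lt_succ_iff.mp (Finset.mem_range.mp hk)
    rw [hfdef]
    calc γ ^ k * epsT P pol1 pol2 ρ0 k * γ ^ (n - k)
        = γ ^ k * γ ^ (n - k) * epsT P pol1 pol2 ρ0 k := by ring
      _ = γ ^ n * epsT P pol1 pol2 ρ0 k := by
          rw [← pow_add, Nat.add_sub_cancel' hkn]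
  have hsumE : Summable fun n : ℕ => γ ^ n * E n := by
    have h := (summable_norm_sum_mul_range_of_summable_norm hfnorm hgnorm).of_norm
    simpa only [hEeq] using h
  have hCauchy : (∑' k, f k) * (1 - γ)⁻¹ = ∑' n : ℕ, γ ^ n * E n := by
    rw [← tsum_geometric_of_lt_one hγ0 hγ1,
      tsum_mul_tsum_eq_tsum_sum_range_of_summable_norm hfnorm hgnorm]
    exact tsum_congr hEeq
  -- lower bound on the return difference
  have hlow : Jret P pol1 ρ0 r γ - Jret P pol2 ρ0 r γ ≥ -(rmax * ((∑' k, f k) * (1 - γ)⁻¹)) := by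
    rw [hJ, hCauchy, ← tsum_mul_left, ← tsum_neg]
    refine Summable.tsum_le_tsum (fun t => ?_) ((hsumE.mul_left rmax).neg)
      (by simpa only [mul_sub] using hsum1.sub hsum2)
    have hbound : |γ ^ t * (c1 t - c2 t)| ≤ rmax * (γ ^ t * E t) := by
      have hcd : |c1 t - c2 t| ≤ rmax * E t := by
        have h1 : c1 t - c2 t = ∑ p : S × A,
            (dDist P pol1 ρ0 t p - dDist P pol2 ρ0 t p) * r p.1 p.2 := by
          rw [hc1def, hc2def, ← Finset.sum_sub_distrib]
          exact Finset.sum_congr rfl fun p _ => (sub_mul _ _ _).symm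
        calc |c1 t - c2 t|
            ≤ ∑ p : S × A, |(dDist P pol1 ρ0 t p - dDist P pol2 ρ0 t p) * r p.1 p.2| := by
              rw [h1]; exact Finset.abs_sum_le_sum_abs _ _
          _ ≤ ∑ p : S × A, |dDist P pol1 ρ0 t p - dDist P pol2 ρ0 t p| * rmax := by
              refine Finset.sum_le_sum fun p _ => ?_
              rw [abs_mul]
              exact mul_le_mul_of_nonneg_left (hr p.1 p.2) (abs_nonneg _)
          _ = rmax * DT P pol1 pol2 ρ0 t := by rw [← Finset.sum_mul, mul_comm]; rfl
          _ ≤ rmax * E t := mul_le_mul_of_nonneg_left (DT_le P pol1 pol2 ρ0 t) hrmax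
      calc |γ ^ t * (c1 t - c2 t)| = γ ^ t * |c1 t - c2 t| := by
            rw [abs_mul, abs_of_nonneg (pow_nonneg hγ0 t)]
        _ ≤ γ ^ t * (rmax * E t) :=
            mul_le_mul_of_nonneg_left hcd (pow_nonneg hγ0 t)
        _ = rmax * (γ ^ t * E t) := by ring
    exact neg_le_of_abs_le hbound
  -- identify the right-hand side
  have hocc : ∀ s : S, stateOcc P pol1 ρ0 γ s
      = (1 - γ) * ∑' t : ℕ, γ ^ t * ∑ a : A, dDist P pol1 ρ0 t (s, a) := by
    intro s
    have hps : ∀ a : A, Summable fun t : ℕ => γ ^ t * dDist P pol1 ρ0 t (s, a) := by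
      intro a
      refine Summable.of_norm_bounded hgeo fun t => ?_
      rw [Real.norm_eq_abs, abs_mul, abs_of_nonneg (pow_nonneg hγ0 t),
        abs_of_nonneg (dDist_nonneg P pol1 ρ0 t (s, a))]
      exact mul_le_of_le_one_right (pow_nonneg hγ0 t) (dDist_le_one P pol1 ρ0 t (s, a))
    unfold stateOcc occ
    rw [← Finset.mul_sum]
    congr 1
    rw [← Summable.tsum_finsetSum fun a _ => hps a]
    exact tsum_congr fun t => (Finset.mul_sum _ _ _).symm
  have hnsum : ∀ s : S, Summable fun t : ℕ => γ ^ t * ∑ a : A, dDist P pol1 ρ0 t (s, a) := by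
    intro s
    refine Summable.of_norm_bounded hgeo fun t => ?_
    rw [Real.norm_eq_abs, abs_mul, abs_of_nonneg (pow_nonneg hγ0 t),
      abs_of_nonneg (nSt_nonneg P pol1 ρ0 t s)]
    refine mul_le_of_le_one_right (pow_nonneg hγ0 t) ?_
    calc ∑ a : A, dDist P pol1 ρ0 t (s, a)
        ≤ ∑ s' : S, ∑ a : A, dDist P pol1 ρ0 t (s', a) :=
          Finset.single_le_sum (fun s' _ => nSt_nonneg P pol1 ρ0 t s') (Finset.mem_univ s)
      _ = 1 := nSt_sum_one P pol1 ρ0 t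
  have hRHS : ∑ s : S, stateOcc P pol1 ρ0 γ s * dTV (pol1 s) (pol2 s)
      = (1 - γ) / 2 * ∑' k, f k := by
    have hdTV : ∀ s : S, dTV (pol1 s) (pol2 s) = 1 / 2 * polGap pol1 pol2 s := fun s => rfl
    calc ∑ s : S, stateOcc P pol1 ρ0 γ s * dTV (pol1 s) (pol2 s)
        = ∑ s : S, (1 - γ) / 2 *
            ∑' t : ℕ, (γ ^ t * ∑ a : A, dDist P pol1 ρ0 t (s, a)) * polGap pol1 pol2 s := by
          refine Finset.sum_congr rfl fun s _ => ?_
          rw [hocc s, hdTV s, tsum_mul_right]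
          ring
      _ = (1 - γ) / 2 * ∑ s : S,
            ∑' t : ℕ, (γ ^ t * ∑ a : A, dDist P pol1 ρ0 t (s, a)) * polGap pol1 pol2 s := by
          rw [Finset.mul_sum]
      _ = (1 - γ) / 2 * ∑' k, f k := by
          congr 1
          rw [← Summable.tsum_finsetSum fun s _ => (hnsum s).mul_right (polGap pol1 pol2 s)]
          refine tsum_congr fun t => ?_
          rw [hfdef]
          show ∑ s : S, γ ^ t * (∑ a : A, dDist P pol1 ρ0 t (s, a)) * polGap pol1 pol2 s
              = γ ^ t * epsT P pol1 pol2 ρ0 t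
          unfold epsT
          rw [Finset.mul_sum]
          exact Finset.sum_congr rfl fun s _ => by ring
  rw [hRHS]
  refine le_trans (le_of_eq ?_) hlow
  field_simp
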